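/- arXiv:2111.10277 — 2 statements merged into one kernel-verified Lean document; each statement's English description precedes it below -/
import Mathlib

section
/- Let q, s ∈ ℤ[i] satisfy Re(q̄·s) ≥ 0, Im(q̄·s) ≥ 0, |q|² − Im(q̄·s) ≥ 0, and |s|² − Im(q̄·s) ≥ 0. Set q' = q − q·i + s and s' = q + s + s·i (the denominators after multiplying by the matrix V3 = [[1−i,1],[1,1+i]]). Then Re(q̄'·s') ≥ 0, Im(q̄'·s') ≥ 0, |q'|² − Im(q̄'·s') ≥ 0, and |s'|² − Im(q̄'·s') ≥ 0. -/
/-- The positivity conditions on `(q, s)` are preserved under multiplying by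
`V3 = [[1-i,1],[1,1+i]]`, i.e. under `q' = q - q i + s`, `s' = q + s + s i`. -/
theorem stmt_7 (q s : GaussianInt)
    (h1 : 0 ≤ (star q * s).re) (h2 : 0 ≤ (star q * s).im)
    (h3 : (star q * s).im ≤ q.norm) (h4 : (star q * s).im ≤ s.norm) :
    let i : GaussianInt := ⟨0, 1⟩
    let q' : GaussianInt := q - q * i + s
    let s' : GaussianInt := q + s + s * i
    0 ≤ (star q' * s').re ∧ 0 ≤ (star q' * s').im ∧
      (star q' * s').im ≤ q'.norm ∧ (star q' * s').im ≤ s'.norm := by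
  intro i q' s'
  obtain ⟨a, b⟩ := q
  obtain ⟨c, d⟩ := s
  simp only [i, q', s', Zsqrtd.norm, star, Zsqrtd.star_mk, Zsqrtd.re_mul, Zsqrtd.im_mul,
    Zsqrtd.re_add, Zsqrtd.im_add, Zsqrtd.re_sub, Zsqrtd.im_sub] at *
  refine ⟨by nlinarith, by nlinarith, by nlinarith, by nlinarith⟩
end

section
/- Define ι on rationals in (0,1) by: if β = (p+r)/(q+s) where p/q and r/s are the left and right Farey neighbors of β (so ps − qr = −1, q, s ≥ 0), then ι(β) = q/(q+s). Then ι is an involution on ℚ ∩ (0,1): ι(ι(β)) = β for all rational β ∈ (0,1). -/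
/-! If `p * s - q * r = -1`, then `(p + r) * q = 1 + p * (q + s)`: the left denominator `q` of
the Farey pair around `a / N` (with `N = q + s`) is the inverse of `a = p + r` modulo `N`.
Both `a / N` and `q / N` are in lowest terms, so `ι` acts on reduced fractions with denominator
`N` as inversion of the numerator modulo `N`, which is an involution. -/

theorem Int.ModEq.eq_of_mem_Ico {n a b : ℤ} (h : a ≡ b [ZMOD n]) (ha : a ∈ Set.Ico 0 n)
    (hb : b ∈ Set.Ico 0 n) : a = b := by
  rwa [Int.ModEq, Int.emod_eq_of_lt ha.1 ha.2, Int.emod_eq_of_lt hb.1 hb.2] at h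

theorem Int.ModEq.of_mul_right_modEq_one {n a b c : ℤ} (ha : a * c ≡ 1 [ZMOD n])
    (hb : b * c ≡ 1 [ZMOD n]) : a ≡ b [ZMOD n] :=
  calc a = a * 1 := (mul_one a).symm
    _ ≡ a * (b * c) [ZMOD n] := hb.symm.mul_left a
    _ = b * (a * c) := by ring
    _ ≡ b * 1 [ZMOD n] := ha.mul_left b
    _ = b := mul_one b

theorem Rat.intCast_div_inj_of_isCoprime {a b c d : ℤ} (hab : IsCoprime a b)
    (hcd : IsCoprime c d) (hb : 0 < b) (hd : 0 < d) (h : (a : ℚ) / b = c / d) :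
    a = c ∧ b = d :=
  Rat.div_int_inj hb hd (Int.isCoprime_iff_gcd_eq_one.mp hab)
    (Int.isCoprime_iff_gcd_eq_one.mp hcd) h

theorem Int.mem_Ioo_of_div_mem_Ioo {a b : ℤ} (hb : 0 < b) (h : (a : ℚ) / b ∈ Set.Ioo 0 1) :
    a ∈ Set.Ioo 0 b := by
  have hb' : (0 : ℚ) < b := by exact_mod_cast hb
  obtain ⟨h0, h1⟩ := h
  rw [div_pos_iff_of_pos_right hb'] at h0
  rw [div_lt_one hb'] at h1
  exact ⟨by exact_mod_cast h0, by exact_mod_cast h1⟩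

section FareyPair

variable {p q r s : ℤ}

theorem isCoprime_mediant_of_det (h : p * s - q * r = -1) : IsCoprime (p + r) (q + s) :=
  ⟨q, -p, by linear_combination -h⟩

theorem isCoprime_left_denom_of_det (h : p * s - q * r = -1) : IsCoprime q (q + s) :=
  ⟨p + r, -p, by linear_combination -h⟩

theorem mediant_num_mul_left_denom_modEq_one (h : p * s - q * r = -1) :
    (p + r) * q ≡ 1 [ZMOD q + s] :=
  Int.modEq_iff_dvd.mpr ⟨-p, by linear_combination h⟩

end FareyPair

theorem stmt_9_general (β : ℚ) (hβ0 : 0 < β) (hβ1 : β < 1)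
    (p q r s : ℤ) (h : p * s - q * r = -1) (hq : 0 < q) (hs : 0 < s)
    (hmid : β = ((p : ℚ) + r) / ((q : ℚ) + s))
    (p' q' r' s' : ℤ) (h' : p' * s' - q' * r' = -1) (hq' : 0 < q') (hs' : 0 < s')
    (hmid' : (q : ℚ) / ((q : ℚ) + s) = ((p' : ℚ) + r') / ((q' : ℚ) + s')) :
    (q' : ℚ) / ((q' : ℚ) + s') = β := by
  rw [← Int.cast_add, ← Int.cast_add] at hmid
  subst hmid
  rw [← Int.cast_add, ← Int.cast_add, ← Int.cast_add] at hmid'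
  rw [← Int.cast_add]
  obtain ⟨hnum, hden⟩ := Rat.intCast_div_inj_of_isCoprime (isCoprime_left_denom_of_det h)
    (isCoprime_mediant_of_det h') (by omega) (by omega) hmid'
  have hinv' := mediant_num_mul_left_denom_modEq_one h'
  rw [← hnum, ← hden, mul_comm] at hinv'
  have hmod : q' ≡ p + r [ZMOD q + s] :=
    hinv'.of_mul_right_modEq_one (mediant_num_mul_left_denom_modEq_one h)
  have hpr := Int.mem_Ioo_of_div_mem_Ioo (by omega) ⟨hβ0, hβ1⟩
  rw [← hden, hmod.eq_of_mem_Ico ⟨hq'.le, by omega⟩ ⟨hpr.1.le, hpr.2⟩]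

/-- The map `ι` sending `β = (p+r)/(q+s)` (with Farey neighbors `p/q < β < r/s`,
`ps - qr = -1`) to `q/(q+s)` is an involution on `ℚ ∩ (0,1)`: if `p'/q' < ι β < r'/s'`
are the Farey neighbors of `ι β`, then `ι (ι β) = q'/(q'+s') = β`. -/
theorem stmt_9 (β : ℚ) (hβ0 : 0 < β) (hβ1 : β < 1)
    (p q r s : ℤ) (h : p * s - q * r = -1) (hq : 0 < q) (hs : 0 < s)
    (hmid : β = ((p : ℚ) + r) / ((q : ℚ) + s))
    (hl : (p : ℚ) / q < β) (hr : β < (r : ℚ) / s)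
    (p' q' r' s' : ℤ) (h' : p' * s' - q' * r' = -1) (hq' : 0 < q') (hs' : 0 < s')
    (hmid' : (q : ℚ) / ((q : ℚ) + s) = ((p' : ℚ) + r') / ((q' : ℚ) + s'))
    (hl' : (p' : ℚ) / q' < (q : ℚ) / ((q : ℚ) + s))
    (hr' : (q : ℚ) / ((q : ℚ) + s) < (r' : ℚ) / s') :
    (q' : ℚ) / ((q' : ℚ) + s') = β :=
  stmt_9_general β hβ0 hβ1 p q r s h hq hs hmid p' q' r' s' h' hq' hs' hmid'
end
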